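/- Let Ω ⊂ ℂ² be a bounded domain containing the origin satisfying (L1) and (L2). Let w¹ = (w¹_1, w¹_2) and w² = (w²_1, w²_2) be pairs of smooth square-integrable functions Ω → ℂ such that: (i) ∂w¹_1/∂z̄_2 = ∂w¹_2/∂z̄_1 and ∂w²_1/∂z̄_2 = ∂w²_2/∂z̄_1 on Ω; (ii) z_1 w¹_k + z_2 w²_k = 0 on Ω for k = 1, 2; (iii) there is ε > 0 such that all w¹_k, w²_k vanish on {z ∈ Ω : |z| < ε}. Then there exists a smooth square-integrable function H : Ω → ℂ such that w¹_k = −z_2 ∂H/∂z̄_k and w²_k = z_1 ∂H/∂z̄_k on Ω for k = 1, 2. -/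

import Mathlib

open MeasureTheory

/-- The Wirtinger derivative `∂f/∂z̄₁` of `f : ℂ² → ℂ` at `z`:
`(1/2)(∂f/∂x₁ + i ∂f/∂y₁)`, computed from the real Fréchet derivative. -/
noncomputable def d1bar (f : ℂ × ℂ → ℂ) (z : ℂ × ℂ) : ℂ :=
  (1 / 2) * (fderiv ℝ f z (1, 0) + Complex.I * fderiv ℝ f z (Complex.I, 0))

/-- The Wirtinger derivative `∂f/∂z̄₂` of `f : ℂ² → ℂ` at `z`:
`(1/2)(∂f/∂x₂ + i ∂f/∂y₂)`, computed from the real Fréchet derivative. -/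
noncomputable def d2bar (f : ℂ × ℂ → ℂ) (z : ℂ × ℂ) : ℂ :=
  (1 / 2) * (fderiv ℝ f z (0, 1) + Complex.I * fderiv ℝ f z (0, Complex.I))

/-- `f` is smooth (in the underlying real variables) on `Ω` and square-integrable on `Ω`
with respect to Lebesgue measure. -/
def SmoothL2On (Ω : Set (ℂ × ℂ)) (f : ℂ × ℂ → ℂ) : Prop :=
  ContDiffOn ℝ (⊤ : ℕ∞) f Ω ∧ MemLp f 2 (volume.restrict Ω)

/-- Hypothesis (L1): every `∂̄`-closed `(0,1)`-form on `Ω` with smooth square-integrable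
coefficients is `∂̄u` for a smooth square-integrable function `u`. -/
def L1 (Ω : Set (ℂ × ℂ)) : Prop :=
  ∀ β₁ β₂ : ℂ × ℂ → ℂ, SmoothL2On Ω β₁ → SmoothL2On Ω β₂ →
    (∀ z ∈ Ω, d2bar β₁ z = d1bar β₂ z) →
    ∃ u : ℂ × ℂ → ℂ, SmoothL2On Ω u ∧
      (∀ z ∈ Ω, d1bar u z = β₁ z) ∧ (∀ z ∈ Ω, d2bar u z = β₂ z)

/-- Hypothesis (L2): every `(0,2)`-form on `Ω` with smooth square-integrable coefficient
is `∂̄` of a `(0,1)`-form with smooth square-integrable coefficients. -/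
def L2cond (Ω : Set (ℂ × ℂ)) : Prop :=
  ∀ β : ℂ × ℂ → ℂ, SmoothL2On Ω β →
    ∃ u₁ u₂ : ℂ × ℂ → ℂ, SmoothL2On Ω u₁ ∧ SmoothL2On Ω u₂ ∧
      ∀ z ∈ Ω, d1bar u₂ z - d2bar u₁ z = β z

lemma d1bar_congr {f g : ℂ × ℂ → ℂ} {z : ℂ × ℂ} (h : f =ᶠ[nhds z] g) :
    d1bar f z = d1bar g z := by unfold d1bar; rw [h.fderiv_eq]

lemma d2bar_congr {f g : ℂ × ℂ → ℂ} {z : ℂ × ℂ} (h : f =ᶠ[nhds z] g) :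
    d2bar f z = d2bar g z := by unfold d2bar; rw [h.fderiv_eq]

lemma d1bar_zero (z : ℂ × ℂ) : d1bar (fun _ => (0:ℂ)) z = 0 := by
  simp [d1bar]

lemma holo_smul_aux {g f : ℂ × ℂ → ℂ} {z : ℂ × ℂ}
    (hg : DifferentiableAt ℂ g z) (hf : DifferentiableAt ℝ f z) (v : ℂ × ℂ) :
    fderiv ℝ (fun w => g w * f w) z v + Complex.I * fderiv ℝ (fun w => g w * f w) z (Complex.I • v)
      = g z * (fderiv ℝ f z v + Complex.I * fderiv ℝ f z (Complex.I • v)) := by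
  have hgr : DifferentiableAt ℝ g z := hg.restrictScalars ℝ
  have hD : fderiv ℝ (fun w => g w * f w) z
      = g z • fderiv ℝ f z + f z • fderiv ℝ g z := fderiv_mul hgr hf
  have hlin : fderiv ℝ g z (Complex.I • v) = Complex.I * fderiv ℝ g z v := by
    rw [hg.fderiv_restrictScalars ℝ]
    simp
  rw [hD]
  simp only [ContinuousLinearMap.add_apply, ContinuousLinearMap.coe_smul',
    Pi.smul_apply, smul_eq_mul, hlin]
  ring_nf
  rw [Complex.I_sq]
  ring

lemma d1bar_holo_mul {g f : ℂ × ℂ → ℂ} {z : ℂ × ℂ}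
    (hg : DifferentiableAt ℂ g z) (hf : DifferentiableAt ℝ f z) :
    d1bar (fun w => g w * f w) z = g z * d1bar f z := by
  have h := holo_smul_aux hg hf ((1:ℂ), (0:ℂ))
  have hv : Complex.I • ((1:ℂ), (0:ℂ)) = ((Complex.I : ℂ), (0:ℂ)) := by
    simp [Prod.smul_mk]
  rw [hv] at h
  unfold d1bar
  rw [h]; ring

lemma d2bar_holo_mul {g f : ℂ × ℂ → ℂ} {z : ℂ × ℂ}
    (hg : DifferentiableAt ℂ g z) (hf : DifferentiableAt ℝ f z) :
    d2bar (fun w => g w * f w) z = g z * d2bar f z := by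
  have h := holo_smul_aux hg hf ((0:ℂ), (1:ℂ))
  have hv : Complex.I • ((0:ℂ), (1:ℂ)) = ((0:ℂ), (Complex.I : ℂ)) := by
    simp [Prod.smul_mk]
  rw [hv] at h
  unfold d2bar
  rw [h]; ring

lemma d2bar_zero (z : ℂ × ℂ) : d2bar (fun _ => (0:ℂ)) z = 0 := by
  simp [d2bar]

noncomputable def auxh (w1 w2 : Fin 2 → ℂ × ℂ → ℂ) (k : Fin 2) (z : ℂ × ℂ) : ℂ :=
  if ‖z.2‖ < ‖z.1‖ then w2 k z / z.1 else -(w1 k z / z.2)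

lemma key_trichotomy (Ω : Set (ℂ × ℂ)) (hopen : IsOpen Ω)
    (w1 w2 : Fin 2 → ℂ × ℂ → ℂ)
    (htau : ∀ k, ∀ z ∈ Ω, z.1 * w1 k z + z.2 * w2 k z = 0)
    (ε : ℝ) (hε : 0 < ε)
    (hvan : ∀ k, ∀ z ∈ Ω, ‖z.1‖ ^ 2 + ‖z.2‖ ^ 2 < ε ^ 2 → w1 k z = 0 ∧ w2 k z = 0) :
    ∀ z ∈ Ω, ((z.1 ≠ 0 ∧ ∀ k, auxh w1 w2 k =ᶠ[nhds z] fun w => (w.1)⁻¹ * w2 k w)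
      ∨ (z.2 ≠ 0 ∧ ∀ k, auxh w1 w2 k =ᶠ[nhds z] fun w => (-(w.2)⁻¹) * w1 k w)
      ∨ (∀ k, auxh w1 w2 k =ᶠ[nhds z] fun _ => (0:ℂ))) := by
  intro z hz
  by_cases hA : ‖z.2‖ < ‖z.1‖
  · left
    refine ⟨?_, fun k => ?_⟩
    · intro e; rw [e] at hA; rw [norm_zero] at hA
      exact absurd hA (norm_nonneg _).not_gt
    have hU : IsOpen {w : ℂ × ℂ | ‖w.2‖ < ‖w.1‖} :=
      isOpen_lt (by fun_prop) (by fun_prop)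
    filter_upwards [hU.mem_nhds hA] with w hw
    simp only [auxh, if_pos hw, div_eq_inv_mul]
  · by_cases hz2 : z.2 = 0
    · -- then z.1 = 0 too, so z near origin
      have hz1 : z.1 = 0 := by
        push_neg at hA
        rw [hz2] at hA; simp at hA
        exact hA
      right; right
      intro k
      have hSopen : IsOpen {w : ℂ × ℂ | ‖w.1‖ ^ 2 + ‖w.2‖ ^ 2 < ε ^ 2} :=
        isOpen_lt (by fun_prop) (by fun_prop)
      have hzS : z ∈ {w : ℂ × ℂ | ‖w.1‖ ^ 2 + ‖w.2‖ ^ 2 < ε ^ 2} := by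
        simp [Set.mem_setOf_eq, hz1, hz2]; positivity
      filter_upwards [(hSopen.inter hopen).mem_nhds ⟨hzS, hz⟩] with w hw
      obtain ⟨e1, e2⟩ := hvan k w hw.2 hw.1
      simp [auxh, e1, e2]
    · right; left
      refine ⟨hz2, fun k => ?_⟩
      have hU : IsOpen ({w : ℂ × ℂ | w.2 ≠ 0} ∩ Ω) :=
        (isOpen_compl_singleton.preimage continuous_snd).inter hopen
      filter_upwards [hU.mem_nhds ⟨hz2, hz⟩] with w hw
      by_cases hw' : ‖w.2‖ < ‖w.1‖
      · have hw1 : w.1 ≠ 0 := by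
          intro e; rw [e, norm_zero] at hw'; exact absurd hw' (norm_nonneg _).not_gt
        have hw2 : w.2 ≠ 0 := hw.1
        have ht := htau k w hw.2
        simp only [auxh, if_pos hw']
        field_simp
        linear_combination ht
      · simp only [auxh, if_neg hw', div_eq_inv_mul, neg_mul]

theorem koszul_test (Ω : Set (ℂ × ℂ))
    (hopen : IsOpen Ω)
    (w1 w2 : Fin 2 → ℂ × ℂ → ℂ)
    (hw1sm : ∀ k, SmoothL2On Ω (w1 k))
    (hw2sm : ∀ k, SmoothL2On Ω (w2 k))
    (hw1cl : ∀ z ∈ Ω, d2bar (w1 0) z = d1bar (w1 1) z)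
    (hw2cl : ∀ z ∈ Ω, d2bar (w2 0) z = d1bar (w2 1) z)
    (htau : ∀ k, ∀ z ∈ Ω, z.1 * w1 k z + z.2 * w2 k z = 0)
    (ε : ℝ) (hε : 0 < ε)
    (hvan : ∀ k, ∀ z ∈ Ω, ‖z.1‖ ^ 2 + ‖z.2‖ ^ 2 < ε ^ 2 → w1 k z = 0 ∧ w2 k z = 0) :
    (∀ k, SmoothL2On Ω (auxh w1 w2 k)) ∧
    (∀ z ∈ Ω, d2bar (auxh w1 w2 0) z = d1bar (auxh w1 w2 1) z) ∧
    (∀ k, ∀ z ∈ Ω, w1 k z = -z.2 * auxh w1 w2 k z ∧ w2 k z = z.1 * auxh w1 w2 k z) := by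
  have key := key_trichotomy Ω hopen w1 w2 htau ε hε hvan
  have hsm : ∀ k, ContDiffOn ℝ (⊤:ℕ∞) (auxh w1 w2 k) Ω := by
    intro k z hz
    rcases key z hz with ⟨hz1, heq⟩ | ⟨hz2, heq⟩ | heq
    · have hm : ContDiffAt ℝ (⊤:ℕ∞) (fun w : ℂ × ℂ => (w.1)⁻¹ * w2 k w) z :=
        (contDiff_fst.contDiffAt.inv hz1).mul ((hw2sm k).1.contDiffAt (hopen.mem_nhds hz))
      exact (hm.congr_of_eventuallyEq (heq k)).contDiffWithinAt
    · have hm : ContDiffAt ℝ (⊤:ℕ∞) (fun w : ℂ × ℂ => (-(w.2)⁻¹) * w1 k w) z :=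
        ((contDiff_snd.contDiffAt.inv hz2).neg).mul ((hw1sm k).1.contDiffAt (hopen.mem_nhds hz))
      exact (hm.congr_of_eventuallyEq (heq k)).contDiffWithinAt
    · exact ((contDiffAt_const (c := (0:ℂ))).congr_of_eventuallyEq (heq k)).contDiffWithinAt
  refine ⟨fun k => ⟨hsm k, ?_⟩, ?_, ?_⟩
  · have hmeas : AEStronglyMeasurable (auxh w1 w2 k) (volume.restrict Ω) :=
      ((hsm k).continuousOn).aestronglyMeasurable hopen.measurableSet
    have hg : MemLp (fun z => (2/ε) * (‖w1 k z‖ + ‖w2 k z‖)) 2 (volume.restrict Ω) :=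
      (((hw1sm k).2.norm.add (hw2sm k).2.norm).const_mul (2/ε))
    apply MemLp.of_le hg hmeas
    rw [ae_restrict_iff' hopen.measurableSet]
    refine Filter.Eventually.of_forall (fun z hz => ?_)
    have hnn : (0:ℝ) ≤ 2/ε * (‖w1 k z‖ + ‖w2 k z‖) := by positivity
    rw [Real.norm_eq_abs, abs_of_nonneg hnn]
    by_cases hS : ‖z.1‖ ^ 2 + ‖z.2‖ ^ 2 < ε ^ 2
    · obtain ⟨e1, e2⟩ := hvan k z hz hS
      simp only [auxh, e1, e2, zero_div, neg_zero, ite_self, norm_zero]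
      positivity
    · push_neg at hS
      by_cases hA : ‖z.2‖ < ‖z.1‖
      · have hz1 : ε/2 ≤ ‖z.1‖ := by nlinarith [norm_nonneg z.1, norm_nonneg z.2]
        simp only [auxh, if_pos hA, norm_div]
        rw [div_le_iff₀ (lt_of_lt_of_le (by positivity) hz1)]
        have h2 : ε * ‖w2 k z‖ ≤ 2 * ‖z.1‖ * (‖w1 k z‖ + ‖w2 k z‖) :=
          mul_le_mul (by linarith) (le_add_of_nonneg_left (norm_nonneg _))
            (norm_nonneg _) (by positivity)
        rw [show 2/ε * (‖w1 k z‖ + ‖w2 k z‖) * ‖z.1‖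
            = 2 * ‖z.1‖ * (‖w1 k z‖ + ‖w2 k z‖) / ε from by ring,
          le_div_iff₀ hε]
        linarith [h2]
      · push_neg at hA
        have hz2 : ε/2 ≤ ‖z.2‖ := by nlinarith [norm_nonneg z.1, norm_nonneg z.2]
        simp only [auxh, if_neg (not_lt.mpr hA), norm_neg, norm_div]
        rw [div_le_iff₀ (lt_of_lt_of_le (by positivity) hz2)]
        have h2 : ε * ‖w1 k z‖ ≤ 2 * ‖z.2‖ * (‖w1 k z‖ + ‖w2 k z‖) :=
          mul_le_mul (by linarith) (le_add_of_nonneg_right (norm_nonneg _))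
            (norm_nonneg _) (by positivity)
        rw [show 2/ε * (‖w1 k z‖ + ‖w2 k z‖) * ‖z.2‖
            = 2 * ‖z.2‖ * (‖w1 k z‖ + ‖w2 k z‖) / ε from by ring,
          le_div_iff₀ hε]
        linarith [h2]
  · intro z hz
    rcases key z hz with ⟨hz1, heq⟩ | ⟨hz2, heq⟩ | heq
    · have hgd : DifferentiableAt ℂ (fun w : ℂ × ℂ => (w.1)⁻¹) z :=
        differentiableAt_fst.inv hz1
      have hf0 : DifferentiableAt ℝ (w2 0) z :=
        (((hw2sm 0).1.contDiffAt (hopen.mem_nhds hz)).differentiableAt (by simp))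
      have hf1 : DifferentiableAt ℝ (w2 1) z :=
        (((hw2sm 1).1.contDiffAt (hopen.mem_nhds hz)).differentiableAt (by simp))
      rw [d2bar_congr (heq 0), d1bar_congr (heq 1), d2bar_holo_mul hgd hf0,
        d1bar_holo_mul hgd hf1, hw2cl z hz]
    · have hgd : DifferentiableAt ℂ (fun w : ℂ × ℂ => -(w.2)⁻¹) z :=
        (differentiableAt_snd.inv hz2).neg
      have hf0 : DifferentiableAt ℝ (w1 0) z :=
        (((hw1sm 0).1.contDiffAt (hopen.mem_nhds hz)).differentiableAt (by simp))
      have hf1 : DifferentiableAt ℝ (w1 1) z :=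
        (((hw1sm 1).1.contDiffAt (hopen.mem_nhds hz)).differentiableAt (by simp))
      rw [d2bar_congr (heq 0), d1bar_congr (heq 1), d2bar_holo_mul hgd hf0,
        d1bar_holo_mul hgd hf1, hw1cl z hz]
    · rw [d2bar_congr (heq 0), d1bar_congr (heq 1), d1bar_zero, d2bar_zero]
  · intro k z hz
    have ht := htau k z hz
    by_cases hA : ‖z.2‖ < ‖z.1‖
    · have hz1 : z.1 ≠ 0 := by
        intro e; rw [e, norm_zero] at hA; exact absurd hA (norm_nonneg _).not_gt
      simp only [auxh, if_pos hA]
      constructor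
      · field_simp
        linear_combination ht
      · field_simp
    · by_cases hz2 : z.2 = 0
      · have hz1 : z.1 = 0 := by
          push_neg at hA
          rw [hz2, norm_zero] at hA
          exact norm_le_zero_iff.mp hA
        obtain ⟨e1, e2⟩ := hvan k z hz (by rw [hz1, hz2]; simp; positivity)
        simp [e1, e2, hz1, hz2]
      · simp only [auxh, if_neg hA]
        constructor
        · field_simp
        · field_simp
          linear_combination ht

/-- The `∂̄`-Koszul complex proposition in `ℂ²` (case `r = 1`, `s = 1`, `F = (z₁, z₂)`),
for smooth square-integrable data. -/
theorem koszul_dim_two_L2 (Ω : Set (ℂ × ℂ))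
    (hopen : IsOpen Ω) (hconn : IsConnected Ω) (hbdd : Bornology.IsBounded Ω)
    (h0 : (0, 0) ∈ Ω) (h1 : L1 Ω) (h2 : L2cond Ω)
    (w1 w2 : Fin 2 → ℂ × ℂ → ℂ)
    (hw1sm : ∀ k, SmoothL2On Ω (w1 k)) (hw2sm : ∀ k, SmoothL2On Ω (w2 k))
    (hw1cl : ∀ z ∈ Ω, d2bar (w1 0) z = d1bar (w1 1) z)
    (hw2cl : ∀ z ∈ Ω, d2bar (w2 0) z = d1bar (w2 1) z)
    (htau : ∀ k, ∀ z ∈ Ω, z.1 * w1 k z + z.2 * w2 k z = 0)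
    (hsupp : ∃ ε > 0, ∀ k, ∀ z ∈ Ω, ‖z.1‖ ^ 2 + ‖z.2‖ ^ 2 < ε ^ 2 →
      w1 k z = 0 ∧ w2 k z = 0) :
    ∃ H : ℂ × ℂ → ℂ, SmoothL2On Ω H ∧
      (∀ z ∈ Ω, w1 0 z = -z.2 * d1bar H z) ∧
      (∀ z ∈ Ω, w1 1 z = -z.2 * d2bar H z) ∧
      (∀ z ∈ Ω, w2 0 z = z.1 * d1bar H z) ∧
      (∀ z ∈ Ω, w2 1 z = z.1 * d2bar H z) := by
  obtain ⟨ε, hε, hvan⟩ := hsupp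
  obtain ⟨hsm, hclosed, hpt⟩ :=
    koszul_test Ω hopen w1 w2 hw1sm hw2sm hw1cl hw2cl htau ε hε hvan
  obtain ⟨H, hHsm, hH1, hH2⟩ :=
    h1 (auxh w1 w2 0) (auxh w1 w2 1) (hsm 0) (hsm 1) hclosed
  refine ⟨H, hHsm, ?_, ?_, ?_, ?_⟩
  · intro z hz; rw [hH1 z hz]; exact (hpt 0 z hz).1
  · intro z hz; rw [hH2 z hz]; exact (hpt 1 z hz).1
  · intro z hz; rw [hH1 z hz]; exact (hpt 0 z hz).2
  · intro z hz; rw [hH2 z hz]; exact (hpt 1 z hz).2
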